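/- arXiv:2102.08090 — 4 statements merged into one kernel-verified Lean document; each statement's English description precedes it below -/
import Mathlib

section
/- Let ℍ be a Hilbert space and let J, K be bounded linear operators on ℍ. Then [J, K] = JK − KJ ≠ Id. (Equivalently: there are no bounded operators J, K on a Hilbert space with JK − KJ = Id.) -/
/-! Wielandt's argument: if `a * b - b * a = 1`, then `a * b ^ (n + 1) - b ^ (n + 1) * a`
equals `(n + 1) • b ^ n`. Hence no power of `b` vanishes, and taking norms gives
`(n + 1) * ‖b ^ n‖ ≤ 2 * ‖a‖ * ‖b‖ * ‖b ^ n‖`, which fails once `n + 1 > 2 * ‖a‖ * ‖b‖`. -/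

theorem mul_pow_sub_pow_mul_of_mul_sub_mul_eq_one {R : Type*} [Ring R] {a b : R}
    (h : a * b - b * a = 1) (n : ℕ) :
    a * b ^ (n + 1) - b ^ (n + 1) * a = (n + 1) • b ^ n := by
  induction n with
  | zero => simpa using h
  | succ n ih =>
    calc a * b ^ (n + 2) - b ^ (n + 2) * a
        = (a * b ^ (n + 1) - b ^ (n + 1) * a) * b + b ^ (n + 1) * (a * b - b * a) := by
          noncomm_ring
      _ = (n + 2) • b ^ (n + 1) := by
          rw [ih, h, smul_mul_assoc, ← pow_succ, mul_one, ← succ_nsmul]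

section NormedRing

variable {A : Type*} [NormedRing A] [NormedSpace ℝ A] {a b : A}

theorem norm_mul_pow_sub_pow_mul_of_mul_sub_mul_eq_one (h : a * b - b * a = 1) (n : ℕ) :
    ‖a * b ^ (n + 1) - b ^ (n + 1) * a‖ = (n + 1) * ‖b ^ n‖ := by
  rw [mul_pow_sub_pow_mul_of_mul_sub_mul_eq_one h, RCLike.norm_nsmul ℝ, nsmul_eq_mul]
  push_cast
  rfl

theorem pow_ne_zero_of_mul_sub_mul_eq_one [Nontrivial A] (h : a * b - b * a = 1) (n : ℕ) :
    b ^ n ≠ 0 := by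
  induction n with
  | zero => simp
  | succ n ih =>
    intro hb
    have := norm_mul_pow_sub_pow_mul_of_mul_sub_mul_eq_one h n
    rw [hb, mul_zero, zero_mul, sub_zero, norm_zero, eq_comm, mul_eq_zero, norm_eq_zero] at this
    exact this.elim (by positivity) ih

theorem add_one_mul_norm_pow_le_of_mul_sub_mul_eq_one (h : a * b - b * a = 1) (n : ℕ) :
    (n + 1) * ‖b ^ n‖ ≤ 2 * ‖a‖ * ‖b‖ * ‖b ^ n‖ := by
  have hpow : ‖b ^ (n + 1)‖ ≤ ‖b‖ * ‖b ^ n‖ := by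
    rw [pow_succ']
    exact norm_mul_le _ _
  calc (n + 1) * ‖b ^ n‖ = ‖a * b ^ (n + 1) - b ^ (n + 1) * a‖ :=
        (norm_mul_pow_sub_pow_mul_of_mul_sub_mul_eq_one h n).symm
    _ ≤ ‖a‖ * ‖b ^ (n + 1)‖ + ‖b ^ (n + 1)‖ * ‖a‖ :=
        (norm_sub_le _ _).trans (add_le_add (norm_mul_le _ _) (norm_mul_le _ _))
    _ = 2 * ‖a‖ * ‖b ^ (n + 1)‖ := by ring
    _ ≤ 2 * ‖a‖ * (‖b‖ * ‖b ^ n‖) := by gcongr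
    _ = 2 * ‖a‖ * ‖b‖ * ‖b ^ n‖ := by ring

theorem mul_sub_mul_ne_one [Nontrivial A] (a b : A) : a * b - b * a ≠ 1 := by
  intro h
  obtain ⟨n, hn⟩ := exists_nat_gt (2 * ‖a‖ * ‖b‖)
  have hpos : 0 < ‖b ^ n‖ := norm_pos_iff.mpr (pow_ne_zero_of_mul_sub_mul_eq_one h n)
  have hle := add_one_mul_norm_pow_le_of_mul_sub_mul_eq_one h n
  linarith [le_of_mul_le_mul_right hle hpos]

end NormedRing

theorem commutator_ne_id_general (H : Type*) [NormedAddCommGroup H] [InnerProductSpace ℂ H]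
    [Nontrivial H] (J K : H →L[ℂ] H) :
    J * K - K * J ≠ 1 :=
  mul_sub_mul_ne_one J K

theorem commutator_ne_id (H : Type*) [NormedAddCommGroup H] [InnerProductSpace ℂ H]
    [CompleteSpace H] [Nontrivial H] (J K : H →L[ℂ] H) :
    J * K - K * J ≠ 1 :=
  commutator_ne_id_general H J K
end

section
/- For each k ∈ ℕ, the polynomial P_k defined by P_k(a) = (−1)^k ∫_0^∞ e^{−t} L_k(2t + 2a) dt satisfies P_k(a) = 2·Σ_{l=0}^{k−1} (−1)^l L_l(2a) + (−1)^k L_k(2a) and P_k′(a) = 2·Σ_{l=0}^{k−1} (−1)^l L_l(2a), where L_l denotes the classical Laguerre polynomial. -/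
open MeasureTheory Real

/-- The classical Laguerre polynomial `L_k(x) = ∑_{l=0}^{k} ((-1)^l / l!) C(k,l) x^l`. -/
noncomputable def laguerre (k : ℕ) (x : ℝ) : ℝ :=
  ∑ l ∈ Finset.range (k + 1), ((-1 : ℝ) ^ l / l.factorial) * (k.choose l) * x ^ l

/-- `P_k(a) = (-1)^k ∫_0^∞ e^{-t} L_k(2t + 2a) dt`. -/
noncomputable def laguerreP (k : ℕ) (a : ℝ) : ℝ :=
  (-1 : ℝ) ^ k * ∫ t in Set.Ioi (0 : ℝ), Real.exp (-t) * laguerre k (2 * t + 2 * a)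

open Filter Asymptotics Polynomial Set Topology

/-!
The antiderivative `A_k(x) = ∫_0^x L_k` of a Laguerre polynomial is `L_k - L_{k+1}`. Integrating
`A_k(2t + 2a)` by parts against `e^{-t}` therefore expresses `∫ e^{-t} L_{k+1}(2t + 2a)` through
`∫ e^{-t} L_k(2t + 2a)`, which gives `P_{k+1}(a) = P_k(a) + (-1)^k A_k(2a)` and `P_0 = 1`.
Both the closed form and the derivative (using `A_k' = L_k`) follow by induction on `k`.
-/

namespace Polynomial

theorem isLittleO_exp_pos_mul_atTop (p : ℝ[X]) {b : ℝ} (hb : 0 < b) :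
    (fun x => p.eval x) =o[atTop] fun x => exp (b * x) := by
  have hX : (fun x => (X ^ p.natDegree : ℝ[X]).eval x) =o[atTop] fun x => exp (b * x) := by
    simp [isLittleO_pow_exp_pos_mul_atTop p.natDegree hb]
  exact (isBigO_atTop_of_degree_le p _ (by simp [degree_le_natDegree])).trans_isLittleO hX

theorem integrableOn_exp_neg_mul_eval (p : ℝ[X]) (c : ℝ) :
    IntegrableOn (fun t => exp (-t) * p.eval t) (Ioi c) := by
  refine integrable_of_isBigO_exp_neg (b := 1 / 2) (by norm_num) (by fun_prop) ?_
  refine ((isBigO_refl (fun t => exp (-t)) atTop).mul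
    (p.isLittleO_exp_pos_mul_atTop (b := 1 / 2) (by norm_num)).isBigO).congr_right fun t => ?_
  rw [← exp_add]
  congr 1
  ring

theorem tendsto_exp_neg_mul_eval_atTop (p : ℝ[X]) :
    Tendsto (fun t => exp (-t) * p.eval t) atTop (𝓝 0) := by
  simpa [exp_neg, div_eq_inv_mul] using p.tendsto_div_exp_atTop

end Polynomial

theorem integral_Ioi_exp_neg_mul_eq {f f' : ℝ → ℝ} {c : ℝ}
    (hf : ∀ t ∈ Ici c, HasDerivAt f (f' t) t)
    (hfi : IntegrableOn (fun t => exp (-t) * f t) (Ioi c))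
    (hf'i : IntegrableOn (fun t => exp (-t) * f' t) (Ioi c))
    (hlim : Tendsto (fun t => exp (-t) * f t) atTop (𝓝 0)) :
    ∫ t in Ioi c, exp (-t) * f t = exp (-c) * f c + ∫ t in Ioi c, exp (-t) * f' t := by
  have hderiv : ∀ t ∈ Ici c, HasDerivAt (fun t => -(exp (-t) * f t))
      (exp (-t) * f t - exp (-t) * f' t) t := fun t ht =>
    ((hasDerivAt_neg t).exp.fun_mul (hf t ht)).fun_neg.congr_deriv (by ring)
  have h := integral_Ioi_of_hasDerivAt_of_tendsto' hderiv (hfi.sub hf'i) (by simpa using hlim.neg)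
  rw [integral_sub hfi hf'i] at h
  linarith

noncomputable def laguerreAntideriv (k : ℕ) (x : ℝ) : ℝ :=
  ∑ j ∈ Finset.range (k + 1), ((-1 : ℝ) ^ j / (j + 1).factorial) * (k.choose j) * x ^ (j + 1)

theorem hasDerivAt_laguerreAntideriv (k : ℕ) (x : ℝ) :
    HasDerivAt (laguerreAntideriv k) (laguerre k x) x := by
  refine HasDerivAt.fun_sum fun j _ => ?_
  refine ((hasDerivAt_pow (j + 1) x).const_mul
    ((-1 : ℝ) ^ j / (j + 1).factorial * (k.choose j))).congr_deriv ?_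
  rw [Nat.factorial_succ, Nat.add_sub_cancel]
  push_cast
  field_simp

theorem laguerreAntideriv_eq (k : ℕ) (x : ℝ) :
    laguerreAntideriv k x = laguerre k x - laguerre (k + 1) x := by
  have hk : laguerre k x = ∑ j ∈ Finset.range (k + 1),
      ((-1 : ℝ) ^ (j + 1) / (j + 1).factorial) * (k.choose (j + 1)) * x ^ (j + 1) + 1 := by
    rw [laguerre, Finset.sum_range_succ', Finset.sum_range_succ _ k, Nat.choose_succ_self]
    simp
  have hk_succ : laguerre (k + 1) x = ∑ j ∈ Finset.range (k + 1),
      (((-1 : ℝ) ^ (j + 1) / (j + 1).factorial) * (k.choose (j + 1)) * x ^ (j + 1)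
        - ((-1 : ℝ) ^ j / (j + 1).factorial) * (k.choose j) * x ^ (j + 1)) + 1 := by
    rw [laguerre, Finset.sum_range_succ']
    congr 1
    · refine Finset.sum_congr rfl fun j _ => ?_
      rw [Nat.choose_succ_succ', pow_succ (-1 : ℝ) j]
      push_cast
      ring
    · simp
  rw [hk, hk_succ, Finset.sum_sub_distrib, laguerreAntideriv]
  ring

theorem exists_polynomial_eval_eq_laguerre_affine (k : ℕ) (b c : ℝ) :
    ∃ p : ℝ[X], ∀ t, p.eval t = laguerre k (b * t + c) :=
  ⟨∑ l ∈ Finset.range (k + 1),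
      C ((-1 : ℝ) ^ l / l.factorial * k.choose l) * (C b * X + C c) ^ l,
    fun t => by simp [laguerre, eval_finsetSum, mul_assoc]⟩

theorem integrableOn_exp_neg_mul_laguerre (k : ℕ) (b c : ℝ) :
    IntegrableOn (fun t => exp (-t) * laguerre k (b * t + c)) (Ioi 0) := by
  obtain ⟨p, hp⟩ := exists_polynomial_eval_eq_laguerre_affine k b c
  simpa only [hp] using p.integrableOn_exp_neg_mul_eval 0

theorem tendsto_exp_neg_mul_laguerre (k : ℕ) (b c : ℝ) :
    Tendsto (fun t => exp (-t) * laguerre k (b * t + c)) atTop (𝓝 0) := by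
  obtain ⟨p, hp⟩ := exists_polynomial_eval_eq_laguerre_affine k b c
  simpa only [hp] using p.tendsto_exp_neg_mul_eval_atTop

theorem laguerreP_zero (a : ℝ) : laguerreP 0 a = 1 := by
  simp [laguerreP, laguerre, -integral_comp_neg_Ioi, integral_exp_neg_Ioi_zero]

theorem integrableOn_exp_neg_mul_laguerreAntideriv (k : ℕ) (b c : ℝ) :
    IntegrableOn (fun t => exp (-t) * laguerreAntideriv k (b * t + c)) (Ioi 0) := by
  simpa only [laguerreAntideriv_eq, mul_sub] using
    (integrableOn_exp_neg_mul_laguerre k b c).fun_sub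
      (integrableOn_exp_neg_mul_laguerre (k + 1) b c)

theorem integral_exp_neg_mul_laguerreAntideriv (k : ℕ) (b c : ℝ) :
    ∫ t in Ioi 0, exp (-t) * laguerreAntideriv k (b * t + c)
      = laguerreAntideriv k c + b * ∫ t in Ioi 0, exp (-t) * laguerre k (b * t + c) := by
  have hderiv : ∀ t ∈ Ici (0 : ℝ), HasDerivAt (fun t => laguerreAntideriv k (b * t + c))
      (b * laguerre k (b * t + c)) t := fun t _ => by
    have hlin : HasDerivAt (fun t : ℝ => b * t + c) b t := by
      simpa using ((hasDerivAt_id t).const_mul b).add_const c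
    exact ((hasDerivAt_laguerreAntideriv k _).comp t hlin).congr_deriv (mul_comm _ _)
  have hLi : IntegrableOn (fun t => exp (-t) * (b * laguerre k (b * t + c))) (Ioi 0) := by
    have h : IntegrableOn (fun t => b * (exp (-t) * laguerre k (b * t + c))) (Ioi 0) :=
      (integrableOn_exp_neg_mul_laguerre k b c).const_mul b
    simpa only [mul_left_comm] using h
  have hlim : Tendsto (fun t => exp (-t) * laguerreAntideriv k (b * t + c)) atTop (𝓝 0) := by
    simpa only [laguerreAntideriv_eq, mul_sub, sub_zero] using
      (tendsto_exp_neg_mul_laguerre k b c).sub (tendsto_exp_neg_mul_laguerre (k + 1) b c)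
  simpa [integral_const_mul, mul_left_comm] using
    integral_Ioi_exp_neg_mul_eq hderiv (integrableOn_exp_neg_mul_laguerreAntideriv k b c) hLi hlim

theorem laguerreP_succ (k : ℕ) (a : ℝ) :
    laguerreP (k + 1) a = laguerreP k a + (-1) ^ k * laguerreAntideriv k (2 * a) := by
  have hsucc : ∫ t in Ioi 0, exp (-t) * laguerre (k + 1) (2 * t + 2 * a)
      = (∫ t in Ioi 0, exp (-t) * laguerre k (2 * t + 2 * a))
        - ∫ t in Ioi 0, exp (-t) * laguerreAntideriv k (2 * t + 2 * a) := by
    rw [← integral_sub (integrableOn_exp_neg_mul_laguerre k 2 (2 * a))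
      (integrableOn_exp_neg_mul_laguerreAntideriv k 2 (2 * a))]
    simp only [laguerreAntideriv_eq, mul_sub, sub_sub_cancel]
  rw [laguerreP, laguerreP, hsucc, integral_exp_neg_mul_laguerreAntideriv, pow_succ]
  ring

theorem laguerreP_eq (k : ℕ) (a : ℝ) :
    laguerreP k a
      = 2 * (∑ l ∈ Finset.range k, (-1 : ℝ) ^ l * laguerre l (2 * a))
        + (-1 : ℝ) ^ k * laguerre k (2 * a) := by
  induction k with
  | zero => simp [laguerreP_zero, laguerre]
  | succ k ih =>
    rw [laguerreP_succ, ih, laguerreAntideriv_eq, Finset.sum_range_succ, pow_succ]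
    ring

theorem hasDerivAt_laguerreP (k : ℕ) (a : ℝ) :
    HasDerivAt (laguerreP k)
      (2 * ∑ l ∈ Finset.range k, (-1 : ℝ) ^ l * laguerre l (2 * a)) a := by
  induction k with
  | zero => simpa [funext laguerreP_zero] using hasDerivAt_const a (1 : ℝ)
  | succ k ih =>
    have h := ih.add (((hasDerivAt_laguerreAntideriv k (2 * a)).comp a
      ((hasDerivAt_id a).const_mul 2)).const_mul ((-1 : ℝ) ^ k))
    rw [funext (laguerreP_succ k)]
    refine h.congr_deriv ?_
    rw [Finset.sum_range_succ]
    ring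

theorem laguerreP_eq_and_deriv (k : ℕ) (a : ℝ) :
    laguerreP k a
      = 2 * (∑ l ∈ Finset.range k, (-1 : ℝ) ^ l * laguerre l (2 * a))
        + (-1 : ℝ) ^ k * laguerre k (2 * a) ∧
    deriv (laguerreP k) a
      = 2 * (∑ l ∈ Finset.range k, (-1 : ℝ) ^ l * laguerre l (2 * a)) :=
  ⟨laguerreP_eq k a, (hasDerivAt_laguerreP k a).deriv⟩
end

section
/- The modified Hardy operator with kernel H(x−y)·H(x)·H(y)/(π(x+y)) is bounded on L²(ℝ) with operator norm at most 1/2. Equivalently, for all u,v ∈ L²(ℝ): |∬_{0≤y≤x} u(y)·conj(v(x))/(π(x+y)) dy dx| ≤ (1/2)·‖u‖_{L²}·‖v‖_{L²}. -/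
/-!
Schur test with the weights `√(y/x)` and `√(x/y)`: the kernel `K(x,y) = 1/(π(x+y))` on
`0 ≤ y ≤ x` factors as `K² = (K √(y/x)) (K √(x/y))`, so Cauchy–Schwarz bounds the bilinear form
by `C ‖u‖₂ ‖v‖₂` as soon as each weighted kernel has integral at most `C` in its free variable.
Both integrals equal `1/2`: `(2/π) arctan √(t/c)` is an antiderivative of `√(c/t) / (π(t+c))`
and takes the values `0`, `1/2`, `1` at `t = 0`, `t = c`, `t = ∞`.
-/

open MeasureTheory Real Set Filter Topology
open scoped ENNReal

theorem ENNReal.mul_mul_le_rpow_mul_rpow {k k₁ k₂ : ℝ≥0∞} (hk : k ^ 2 ≤ k₁ * k₂) (a b : ℝ≥0∞) :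
    k * a * b ≤ (k₁ * a ^ (2 : ℝ)) ^ (2⁻¹ : ℝ) * (k₂ * b ^ (2 : ℝ)) ^ (2⁻¹ : ℝ) := by
  rw [← ENNReal.mul_rpow_of_nonneg _ _ (by norm_num),
    ← ENNReal.pow_rpow_inv_natCast two_ne_zero (k * a * b)]
  refine ENNReal.rpow_le_rpow ?_ (by norm_num)
  simp only [ENNReal.rpow_two]
  calc (k * a * b) ^ 2 = k ^ 2 * (a ^ 2 * b ^ 2) := by ring
    _ ≤ k₁ * k₂ * (a ^ 2 * b ^ 2) := by gcongr
    _ = k₁ * a ^ 2 * (k₂ * b ^ 2) := by ring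

section SchurTest

variable {α β : Type*} [MeasurableSpace α] [MeasurableSpace β] {μ : Measure α} {ν : Measure β}
  [SFinite μ] [SFinite ν]

theorem lintegral_mul_snd_le_of_ae_lintegral_le {K : α × β → ℝ≥0∞} (hK : Measurable K)
    {f : β → ℝ≥0∞} (hf : AEMeasurable f ν) {C : ℝ≥0∞}
    (hC : ∀ᵐ y ∂ν, ∫⁻ x, K (x, y) ∂μ ≤ C) :
    ∫⁻ p, K p * f p.2 ∂μ.prod ν ≤ C * ∫⁻ y, f y ∂ν := by
  rw [lintegral_prod_symm (fun p => K p * f p.2) (hK.aemeasurable.mul hf.comp_snd),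
    ← lintegral_const_mul'' C hf]
  refine lintegral_mono_ae ?_
  filter_upwards [hC] with y hy
  have hKy : Measurable fun x => K (x, y) := hK.comp measurable_prodMk_right
  rw [lintegral_mul_const (f y) hKy]
  exact mul_le_mul_left hy _

theorem lintegral_mul_fst_le_of_ae_lintegral_le {K : α × β → ℝ≥0∞} (hK : Measurable K)
    {g : α → ℝ≥0∞} (hg : AEMeasurable g μ) {C : ℝ≥0∞}
    (hC : ∀ᵐ x ∂μ, ∫⁻ y, K (x, y) ∂ν ≤ C) :
    ∫⁻ p, K p * g p.1 ∂μ.prod ν ≤ C * ∫⁻ x, g x ∂μ := by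
  rw [← lintegral_prod_swap]
  exact lintegral_mul_snd_le_of_ae_lintegral_le (hK.comp measurable_swap) hg hC

variable {E F : Type*} [NormedAddCommGroup E] [NormedAddCommGroup F]

theorem lintegral_mul_enorm_mul_enorm_le_of_schur {K K₁ K₂ : α × β → ℝ≥0∞}
    (hK₁ : Measurable K₁) (hK₂ : Measurable K₂) (hK : ∀ᵐ p ∂μ.prod ν, K p ^ 2 ≤ K₁ p * K₂ p)
    {C : ℝ≥0∞} (h₁ : ∀ᵐ y ∂ν, ∫⁻ x, K₁ (x, y) ∂μ ≤ C) (h₂ : ∀ᵐ x ∂μ, ∫⁻ y, K₂ (x, y) ∂ν ≤ C)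
    {u : β → E} {v : α → F} (hu : AEStronglyMeasurable u ν) (hv : AEStronglyMeasurable v μ) :
    ∫⁻ p, K p * ‖u p.2‖ₑ * ‖v p.1‖ₑ ∂μ.prod ν ≤ C * eLpNorm u 2 ν * eLpNorm v 2 μ := by
  have hu2 : AEMeasurable (fun y => ‖u y‖ₑ ^ (2 : ℝ)) ν := hu.enorm.pow_const _
  have hv2 : AEMeasurable (fun x => ‖v x‖ₑ ^ (2 : ℝ)) μ := hv.enorm.pow_const _
  set U := fun p : α × β => K₁ p * ‖u p.2‖ₑ ^ (2 : ℝ)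
  set V := fun p : α × β => K₂ p * ‖v p.1‖ₑ ^ (2 : ℝ)
  have hU : AEMeasurable U (μ.prod ν) := hK₁.aemeasurable.mul hu2.comp_snd
  have hV : AEMeasurable V (μ.prod ν) := hK₂.aemeasurable.mul hv2.comp_fst
  calc ∫⁻ p, K p * ‖u p.2‖ₑ * ‖v p.1‖ₑ ∂μ.prod ν
      ≤ ∫⁻ p, U p ^ (2⁻¹ : ℝ) * V p ^ (2⁻¹ : ℝ) ∂μ.prod ν := by
        refine lintegral_mono_ae ?_
        filter_upwards [hK] with p hp
        exact ENNReal.mul_mul_le_rpow_mul_rpow hp _ _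
    _ ≤ (∫⁻ p, U p ∂μ.prod ν) ^ (2⁻¹ : ℝ) * (∫⁻ p, V p ∂μ.prod ν) ^ (2⁻¹ : ℝ) := by
        have holder := ENNReal.lintegral_mul_le_Lp_mul_Lq (μ.prod ν)
          Real.HolderConjugate.two_two (hU.pow_const (2⁻¹ : ℝ)) (hV.pow_const (2⁻¹ : ℝ))
        simpa only [Pi.mul_apply, ← ENNReal.rpow_mul, one_div,
          inv_mul_cancel₀ (two_ne_zero : (2 : ℝ) ≠ 0), ENNReal.rpow_one] using holder
    _ ≤ (C * ∫⁻ y, ‖u y‖ₑ ^ (2 : ℝ) ∂ν) ^ (2⁻¹ : ℝ) *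
          (C * ∫⁻ x, ‖v x‖ₑ ^ (2 : ℝ) ∂μ) ^ (2⁻¹ : ℝ) := by
        gcongr
        · exact lintegral_mul_snd_le_of_ae_lintegral_le hK₁ hu2 h₁
        · exact lintegral_mul_fst_le_of_ae_lintegral_le hK₂ hv2 h₂
    _ = C * eLpNorm u 2 ν * eLpNorm v 2 μ := by
        have hC : (C ^ 2) ^ (2⁻¹ : ℝ) = C := by
          simpa using ENNReal.pow_rpow_inv_natCast two_ne_zero C
        rw [eLpNorm_eq_lintegral_rpow_enorm_toReal two_ne_zero ENNReal.ofNat_ne_top,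
          eLpNorm_eq_lintegral_rpow_enorm_toReal two_ne_zero ENNReal.ofNat_ne_top,
          ENNReal.toReal_ofNat, one_div, ENNReal.mul_rpow_of_nonneg _ _ (by norm_num),
          ENNReal.mul_rpow_of_nonneg _ _ (by norm_num), mul_mul_mul_comm,
          ← ENNReal.mul_rpow_of_nonneg _ _ (by norm_num), ← pow_two, hC, mul_assoc]

end SchurTest

section FTC

variable {g g' : ℝ → ℝ}

theorem lintegral_Ioi_ofReal_deriv_of_nonneg {a l : ℝ} (hcont : ContinuousWithinAt g (Ici a) a)
    (hderiv : ∀ x ∈ Ioi a, HasDerivAt g (g' x) x) (g'pos : ∀ x ∈ Ioi a, 0 ≤ g' x)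
    (hg : Tendsto g atTop (𝓝 l)) :
    ∫⁻ x in Ioi a, ENNReal.ofReal (g' x) = ENNReal.ofReal (l - g a) := by
  rw [← integral_Ioi_of_hasDerivAt_of_nonneg hcont hderiv g'pos hg,
    ofReal_integral_eq_lintegral_ofReal (integrableOn_Ioi_deriv_of_nonneg hcont hderiv g'pos hg)
      ((ae_restrict_iff' measurableSet_Ioi).2 (Eventually.of_forall g'pos))]

theorem lintegral_Ioc_ofReal_deriv_of_nonneg {a b : ℝ} (hab : a ≤ b)
    (hcont : ContinuousOn g (Icc a b)) (hderiv : ∀ x ∈ Ioo a b, HasDerivAt g (g' x) x)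
    (g'pos : ∀ x ∈ Ioo a b, 0 ≤ g' x) :
    ∫⁻ x in Ioc a b, ENNReal.ofReal (g' x) = ENNReal.ofReal (g b - g a) := by
  have hint := intervalIntegral.integrableOn_deriv_of_nonneg hcont hderiv g'pos
  rw [← intervalIntegral.integral_eq_sub_of_hasDerivAt_of_le hab hcont hderiv
      (intervalIntegrable_iff_integrableOn_Ioc_of_le hab |>.2 hint),
    intervalIntegral.integral_of_le hab, integral_Ioc_eq_integral_Ioo,
    setLIntegral_congr Ioo_ae_eq_Ioc.symm,
    ofReal_integral_eq_lintegral_ofReal (hint.mono_set Ioo_subset_Ioc_self)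
      ((ae_restrict_iff' measurableSet_Ioo).2 (Eventually.of_forall g'pos))]

end FTC

theorem hasDerivAt_arctan_sqrt_div {c t : ℝ} (hc : 0 < c) (ht : 0 < t) :
    HasDerivAt (fun s => 2 / π * arctan √(s / c)) (√(c / t) / (π * (t + c))) t := by
  have hsqrt := ((hasDerivAt_id t).div_const c).sqrt (div_pos ht hc).ne'
  refine (hsqrt.arctan.const_mul (2 / π)).congr_deriv ?_
  simp only [id, sqrt_div' c ht.le, sqrt_div' t hc.le]
  have := sqrt_pos.2 ht
  have := sqrt_pos.2 hc
  field_simp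
  rw [sq_sqrt hc.le, sq_sqrt ht.le]
  ring

theorem lintegral_Ioi_ofReal_sqrt_div {c : ℝ} (hc : 0 < c) :
    ∫⁻ t in Ioi c, ENNReal.ofReal (√(c / t) / (π * (t + c))) = 2⁻¹ := by
  have hlim : Tendsto (fun s => 2 / π * arctan √(s / c)) atTop (𝓝 (2 / π * (π / 2))) :=
    ((tendsto_nhds_of_tendsto_nhdsWithin tendsto_arctan_atTop).comp
      (tendsto_sqrt_atTop.comp (tendsto_id.atTop_div_const hc))).const_mul _
  rw [lintegral_Ioi_ofReal_deriv_of_nonneg (by fun_prop)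
      (fun t ht => hasDerivAt_arctan_sqrt_div hc (hc.trans ht))
      (fun t ht => div_nonneg (sqrt_nonneg _) (by nlinarith [pi_pos, ht.out])) hlim,
    div_self hc.ne', sqrt_one, arctan_one,
    show 2 / π * (π / 2) - 2 / π * (π / 4) = (2 : ℝ)⁻¹ by field_simp; norm_num,
    ENNReal.ofReal_inv_of_pos two_pos, ENNReal.ofReal_ofNat]

theorem lintegral_Ioc_ofReal_sqrt_div {c : ℝ} (hc : 0 < c) :
    ∫⁻ t in Ioc 0 c, ENNReal.ofReal (√(c / t) / (π * (t + c))) = 2⁻¹ := by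
  rw [lintegral_Ioc_ofReal_deriv_of_nonneg hc.le (by fun_prop)
      (fun t ht => hasDerivAt_arctan_sqrt_div hc ht.1)
      (fun t ht => div_nonneg (sqrt_nonneg _) (by nlinarith [pi_pos, ht.1])),
    div_self hc.ne', sqrt_one, arctan_one, zero_div, sqrt_zero, arctan_zero,
    show 2 / π * (π / 4) - 2 / π * 0 = (2 : ℝ)⁻¹ by field_simp; ring,
    ENNReal.ofReal_inv_of_pos two_pos, ENNReal.ofReal_ofNat]

noncomputable def hardyKernel (p : ℝ × ℝ) : ℝ≥0∞ :=
  if 0 ≤ p.2 ∧ p.2 ≤ p.1 then ENNReal.ofReal (π * (p.1 + p.2))⁻¹ else 0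

theorem measurable_hardyKernel : Measurable hardyKernel :=
  Measurable.ite ((measurableSet_le measurable_const measurable_snd).inter
    (measurableSet_le measurable_snd measurable_fst)) (by fun_prop) measurable_const

theorem hardyKernel_mul_ofReal {x y : ℝ} (h : 0 ≤ y ∧ y ≤ x) (s : ℝ) :
    hardyKernel (x, y) * ENNReal.ofReal s = ENNReal.ofReal (s / (π * (x + y))) := by
  have : 0 ≤ x + y := by linarith [h.1, h.2]
  rw [hardyKernel, if_pos h, ← ENNReal.ofReal_mul (by positivity), inv_mul_eq_div]

theorem hardyKernel_sq_eq_of_snd_ne_zero {p : ℝ × ℝ} (hp : p.2 ≠ 0) :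
    hardyKernel p ^ 2 =
      hardyKernel p * ENNReal.ofReal √(p.2 / p.1) *
        (hardyKernel p * ENNReal.ofReal √(p.1 / p.2)) := by
  obtain ⟨x, y⟩ := p
  by_cases h : 0 ≤ y ∧ y ≤ x
  · have hy : 0 < y := lt_of_le_of_ne h.1 (Ne.symm hp)
    have hx : 0 < x := hy.trans_le h.2
    have hxy : y / x * (x / y) = 1 := by field_simp
    rw [mul_mul_mul_comm, ← ENNReal.ofReal_mul (sqrt_nonneg _), ← sqrt_mul (by positivity), hxy,
      sqrt_one, ENNReal.ofReal_one, mul_one, pow_two]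
  · simp [hardyKernel, h]

theorem enorm_hardy_integrand (u v : ℝ → ℂ) (p : ℝ × ℝ) :
    ‖if 0 ≤ p.2 ∧ p.2 ≤ p.1 then
        u p.2 * (starRingEnd ℂ) (v p.1) / ((π : ℂ) * ((p.1 + p.2 : ℝ) : ℂ)) else 0‖ₑ =
      hardyKernel p * ‖u p.2‖ₑ * ‖v p.1‖ₑ := by
  obtain ⟨x, y⟩ := p
  by_cases h : 0 ≤ y ∧ y ≤ x
  · have : 0 ≤ x + y := by linarith [h.1, h.2]
    rw [if_pos h, ← ofReal_norm, ← ofReal_norm, ← ofReal_norm, hardyKernel_mul_ofReal h,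
      ← ENNReal.ofReal_mul (by positivity)]
    congr 1
    rw [norm_div, norm_mul, norm_mul, RCLike.norm_conj, Complex.norm_real, Complex.norm_real,
      norm_of_nonneg pi_pos.le, norm_of_nonneg this]
    ring
  · simp [hardyKernel, h]

theorem lintegral_hardyKernel_mul_sqrt_snd_div_fst_le (y : ℝ) :
    ∫⁻ x, hardyKernel (x, y) * ENNReal.ofReal √(y / x) ≤ 2⁻¹ := by
  rcases le_or_gt y 0 with hy | hy
  · have hzero : ∀ x, hardyKernel (x, y) * ENNReal.ofReal √(y / x) = 0 := by
      intro x
      by_cases h : 0 ≤ y ∧ y ≤ x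
      · rw [le_antisymm hy h.1, zero_div, sqrt_zero, ENNReal.ofReal_zero, mul_zero]
      · rw [hardyKernel, if_neg h, zero_mul]
    simp [hzero]
  refine le_of_eq ?_
  calc ∫⁻ x, hardyKernel (x, y) * ENNReal.ofReal √(y / x)
      = ∫⁻ x in Ioi y, ENNReal.ofReal (√(y / x) / (π * (x + y))) := by
        rw [setLIntegral_congr Ioi_ae_eq_Ici, ← lintegral_indicator measurableSet_Ici]
        refine lintegral_congr fun x => ?_
        by_cases hx : x ∈ Ici y
        · rw [indicator_of_mem hx, hardyKernel_mul_ofReal ⟨hy.le, hx⟩]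
        · rw [indicator_of_notMem hx, hardyKernel, if_neg fun h => hx h.2, zero_mul]
    _ = 2⁻¹ := lintegral_Ioi_ofReal_sqrt_div hy

theorem lintegral_hardyKernel_mul_sqrt_fst_div_snd_le (x : ℝ) :
    ∫⁻ y, hardyKernel (x, y) * ENNReal.ofReal √(x / y) ≤ 2⁻¹ := by
  rcases le_or_gt x 0 with hx | hx
  · have hzero : ∀ y, hardyKernel (x, y) * ENNReal.ofReal √(x / y) = 0 := by
      intro y
      by_cases h : 0 ≤ y ∧ y ≤ x
      · rw [le_antisymm hx (h.1.trans h.2), zero_div, sqrt_zero, ENNReal.ofReal_zero, mul_zero]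
      · rw [hardyKernel, if_neg h, zero_mul]
    simp [hzero]
  refine le_of_eq ?_
  calc ∫⁻ y, hardyKernel (x, y) * ENNReal.ofReal √(x / y)
      = ∫⁻ y in Ioc 0 x, ENNReal.ofReal (√(x / y) / (π * (y + x))) := by
        rw [setLIntegral_congr Ioc_ae_eq_Icc, ← lintegral_indicator measurableSet_Icc]
        refine lintegral_congr fun y => ?_
        by_cases hy : y ∈ Icc 0 x
        · rw [indicator_of_mem hy, hardyKernel_mul_ofReal hy, add_comm]
        · rw [indicator_of_notMem hy, hardyKernel, if_neg (show ¬(0 ≤ y ∧ y ≤ x) from hy),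
            zero_mul]
    _ = 2⁻¹ := lintegral_Ioc_ofReal_sqrt_div hx

/-- The modified Hardy operator, with kernel `H(x-y) H(x) H(y) / (π (x+y))`, is bounded on
`L²(ℝ)` with norm at most `1/2`: for all `u, v ∈ L²(ℝ)`,
`|∬_{0 ≤ y ≤ x} u(y) conj(v(x)) / (π (x+y)) dy dx| ≤ (1/2) ‖u‖_{L²} ‖v‖_{L²}`. -/
theorem modified_hardy_bound (u v : ℝ → ℂ)
    (hu : MemLp u 2 volume) (hv : MemLp v 2 volume) :
    ENNReal.ofReal
        ‖∫ p : ℝ × ℝ,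
            (if 0 ≤ p.2 ∧ p.2 ≤ p.1 then
              u p.2 * (starRingEnd ℂ) (v p.1) / ((Real.pi : ℂ) * ((p.1 + p.2 : ℝ) : ℂ))
            else 0)‖
      ≤ 2⁻¹ * eLpNorm u 2 volume * eLpNorm v 2 volume := by
  have hK : ∀ᵐ p : ℝ × ℝ ∂volume.prod volume, hardyKernel p ^ 2 ≤
      hardyKernel p * ENNReal.ofReal √(p.2 / p.1) *
        (hardyKernel p * ENNReal.ofReal √(p.1 / p.2)) :=
    Measure.quasiMeasurePreserving_snd.ae (Measure.ae_ne volume 0) |>.mono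
      fun p hp => (hardyKernel_sq_eq_of_snd_ne_zero hp).le
  rw [ofReal_norm, Measure.volume_eq_prod]
  calc _ ≤ _ := enorm_integral_le_lintegral_enorm _
    _ = ∫⁻ p, hardyKernel p * ‖u p.2‖ₑ * ‖v p.1‖ₑ ∂volume.prod volume :=
        lintegral_congr (enorm_hardy_integrand u v)
    _ ≤ 2⁻¹ * eLpNorm u 2 volume * eLpNorm v 2 volume :=
        lintegral_mul_enorm_mul_enorm_le_of_schur
          (measurable_hardyKernel.mul (by fun_prop)) (measurable_hardyKernel.mul (by fun_prop)) hK
          (Eventually.of_forall lintegral_hardyKernel_mul_sqrt_snd_div_fst_le)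
          (Eventually.of_forall lintegral_hardyKernel_mul_sqrt_fst_div_snd_le) hu.1 hv.1
end

section
/- Let a₁, …, aₙ be positive and pairwise distinct real numbers. Then the integral K₀(a) = ∫_{{t ∈ ℝ₊ⁿ : Σⱼ tⱼ/aⱼ ≥ 1}} e^{−(t₁+⋯+tₙ)} dt equals Σ_{j=1}^{n} e^{−aⱼ} · (∏_{k≠j} aₖ) / (∏_{k≠j} (aₖ − aⱼ)). -/
/-!
Write `K(a, c)` for the integral of `e^{-∑ tⱼ}` over `{t ≥ 0, ∑ tⱼ/aⱼ ≥ c}`, so that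
`K₀(a) = K(a, 1)`. Fixing the first coordinate `t₁ = x`, the fibre is the same region for
`(a₂, …, aₙ)` at threshold `c - x/a₁`, which is the whole orthant (of mass `1`) as soon as
`x ≥ c a₁`. Hence `K(a, c) = ∫₀^{c a₁} e^{-x} K(a₂…, c - x/a₁) dx + e^{-c a₁}`, and the formula
`K(a, c) = ∑ⱼ e^{-c aⱼ} ∏_{k≠j} aₖ/(aₖ - aⱼ)` follows by induction on `n`: each exponential
integrates in closed form, and the coefficient of the new exponential `e^{-c a₁}` comes out right
thanks to the partial-fraction identity `∑ⱼ ∏_{k≠j} aₖ/(aₖ - aⱼ) = 1`, the value at `0` of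
`∑ⱼ Lⱼ = 1` for the Lagrange basis `Lⱼ` at the nodes `aⱼ`.
-/

open MeasureTheory Real Set Finset

theorem sum_prod_erase_div_sub_eq_one {F ι : Type*} [Field F] [DecidableEq ι] {s : Finset ι}
    {v : ι → F} (hvs : Set.InjOn v s) (hs : s.Nonempty) :
    ∑ j ∈ s, ∏ k ∈ s.erase j, v k / (v k - v j) = 1 := by
  have h := congrArg (Polynomial.eval 0) (Lagrange.sum_basis hvs hs)
  rw [Polynomial.eval_finsetSum, Polynomial.eval_one] at h
  rw [← h]
  refine sum_congr rfl fun j hj => ?_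
  rw [Lagrange.basis, Polynomial.eval_prod]
  refine prod_congr rfl fun k hk => ?_
  have hkj : v k - v j ≠ 0 :=
    sub_ne_zero.2 fun h => (mem_erase.1 hk).1 (hvs (mem_erase.1 hk).2 hj h)
  have hjk : v j - v k ≠ 0 := by rwa [← neg_sub, neg_ne_zero]
  simp only [Lagrange.basisDivisor, Polynomial.eval_mul, Polynomial.eval_C, Polynomial.eval_sub,
    Polynomial.eval_X]
  field_simp
  ring

theorem Fin.prod_univ_erase_zero {M : Type*} [CommMonoid M] {n : ℕ} (f : Fin (n + 1) → M) :
    ∏ k ∈ univ.erase 0, f k = ∏ k : Fin n, f k.succ := by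
  rw [Fin.univ_succ, erase_cons, prod_map]
  rfl

theorem Fin.prod_univ_erase_succ {M : Type*} [CommMonoid M] {n : ℕ} (f : Fin (n + 1) → M)
    (j : Fin n) : ∏ k ∈ univ.erase j.succ, f k = f 0 * ∏ k ∈ univ.erase j, f k.succ := by
  rw [Fin.univ_succ, erase_cons_of_ne _ (Fin.succ_ne_zero j).symm, Finset.prod_cons]
  change f 0 * ∏ k ∈ (univ.map (Fin.succEmb n)).erase (Fin.succEmb n j), f k = _
  rw [← map_erase, prod_map]
  rfl

theorem integral_eq_integral_integral_cons {n : ℕ} {E : Type*} [NormedAddCommGroup E]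
    [NormedSpace ℝ E] {f : (Fin (n + 1) → ℝ) → E} (hf : Integrable f) :
    ∫ t, f t = ∫ x, ∫ u, f (Fin.cons x u) := by
  have e := (volume_preserving_piFinSuccAbove (fun _ : Fin (n + 1) => ℝ) 0).symm
  rw [← e.integral_comp', Measure.volume_eq_prod, integral_prod]
  · simp [MeasurableEquiv.piFinSuccAbove_symm_apply, Fin.insertNthEquiv]
  · exact (e.integrable_comp_emb (MeasurableEquiv.measurableEmbedding _)).2 hf

section TailIntegral

variable {ι : Type*} [Fintype ι]

def tailRegion (a : ι → ℝ) (c : ℝ) : Set (ι → ℝ) := {t | (∀ j, 0 ≤ t j) ∧ c ≤ ∑ j, t j / a j}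

noncomputable def tailIntegral (a : ι → ℝ) (c : ℝ) : ℝ := ∫ t in tailRegion a c, exp (-(∑ j, t j))

noncomputable def tailFormula [DecidableEq ι] (a : ι → ℝ) (c : ℝ) : ℝ :=
  ∑ j, exp (-(c * a j)) * ∏ k ∈ univ.erase j, a k / (a k - a j)

theorem exp_neg_sum_eq_prod (t : ι → ℝ) : exp (-(∑ j, t j)) = ∏ j, exp (-t j) := by
  rw [← sum_neg_distrib, exp_sum]

theorem integrableOn_exp_neg_sum_orthant :
    IntegrableOn (fun t : ι → ℝ => exp (-(∑ j, t j))) (Set.univ.pi fun _ => Ici 0) := by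
  simp_rw [IntegrableOn, volume_pi, Measure.restrict_pi_pi, exp_neg_sum_eq_prod]
  refine Integrable.fintype_prod (f := fun _ x => exp (-x)) fun _ => ?_
  rw [← IntegrableOn, integrableOn_Ici_iff_integrableOn_Ioi]
  simpa using exp_neg_integrableOn_Ioi 0 one_pos

theorem setIntegral_exp_neg_sum_orthant :
    ∫ t in Set.univ.pi (fun _ => Ici 0), exp (-(∑ j : ι, t j)) = 1 := by
  simp_rw [volume_pi, Measure.restrict_pi_pi, exp_neg_sum_eq_prod]
  rw [integral_fintype_prod_eq_prod (f := fun _ x => exp (-x)), integral_Ici_eq_integral_Ioi,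
    integral_exp_neg_Ioi_zero, prod_const_one]

theorem measurableSet_tailRegion (a : ι → ℝ) (c : ℝ) : MeasurableSet (tailRegion a c) := by
  unfold tailRegion
  measurability

theorem tailRegion_subset_orthant (a : ι → ℝ) (c : ℝ) :
    tailRegion a c ⊆ Set.univ.pi fun _ => Ici 0 :=
  fun _ ht j _ => ht.1 j

theorem tailRegion_of_nonpos {a : ι → ℝ} (ha : ∀ j, 0 ≤ a j) {c : ℝ} (hc : c ≤ 0) :
    tailRegion a c = Set.univ.pi fun _ => Ici 0 := by
  refine (tailRegion_subset_orthant a c).antisymm fun t ht => ⟨fun j => ht j trivial, ?_⟩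
  exact hc.trans (sum_nonneg fun j _ => div_nonneg (ht j trivial) (ha j))

theorem tailIntegral_of_nonpos {a : ι → ℝ} (ha : ∀ j, 0 ≤ a j) {c : ℝ} (hc : c ≤ 0) :
    tailIntegral a c = 1 := by
  rw [tailIntegral, tailRegion_of_nonpos ha hc, setIntegral_exp_neg_sum_orthant]

theorem integrable_indicator_tailRegion (a : ι → ℝ) (c : ℝ) :
    Integrable ((tailRegion a c).indicator fun t => exp (-(∑ j, t j))) :=
  (integrable_indicator_iff (measurableSet_tailRegion a c)).2
    (integrableOn_exp_neg_sum_orthant.mono_set (tailRegion_subset_orthant a c))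

end TailIntegral

theorem cons_mem_tailRegion_cons {n : ℕ} {α : ℝ} {b : Fin n → ℝ} {c x : ℝ} {u : Fin n → ℝ} :
    (Fin.cons x u : Fin (n + 1) → ℝ) ∈ tailRegion (Fin.cons α b : Fin (n + 1) → ℝ) c ↔
      0 ≤ x ∧ u ∈ tailRegion b (c - x / α) := by
  simp only [tailRegion, Set.mem_ofPred_eq, Fin.forall_fin_succ, Fin.sum_univ_succ, Fin.cons_zero,
    Fin.cons_succ, sub_le_iff_le_add', and_assoc]

theorem tailIntegral_cons {n : ℕ} (α : ℝ) (b : Fin n → ℝ) (c : ℝ) :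
    tailIntegral (Fin.cons α b : Fin (n + 1) → ℝ) c =
      ∫ x in Set.Ici 0, exp (-x) * tailIntegral b (c - x / α) := by
  have hsplit : ∀ x u, (tailRegion (Fin.cons α b : Fin (n + 1) → ℝ) c).indicator
      (fun t => exp (-(∑ j, t j))) (Fin.cons x u) =
      (Set.Ici 0).indicator (fun x => exp (-x)) x *
        (tailRegion b (c - x / α)).indicator (fun u => exp (-(∑ j, u j))) u := by
    intro x u
    by_cases hx : 0 ≤ x <;> by_cases hu : u ∈ tailRegion b (c - x / α) <;>
      simp [cons_mem_tailRegion_cons, Fin.sum_univ_succ, hx, hu, mul_comm, exp_add]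
  rw [tailIntegral, ← integral_indicator (measurableSet_tailRegion _ _),
    integral_eq_integral_integral_cons (integrable_indicator_tailRegion _ _),
    ← integral_indicator measurableSet_Ici]
  simp_rw [hsplit, integral_const_mul, tailIntegral,
    integral_indicator (measurableSet_tailRegion _ _), Set.indicator_mul_left]

theorem setIntegral_Ici_exp_neg_mul_eq {f g : ℝ → ℝ} {A : ℝ} (hA : 0 < A) (hg : Continuous g)
    (hfg : EqOn f g (Ioo 0 A)) (hf : EqOn f 1 (Ioi A)) :
    ∫ x in Set.Ici 0, exp (-x) * f x = (∫ x in 0..A, exp (-x) * g x) + exp (-A) := by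
  have hfg' : EqOn (fun x => exp (-x) * g x) (fun x => exp (-x) * f x) (uIoo 0 A) := by
    rw [uIoo_of_le hA.le]
    exact fun x hx => by simp [hfg hx]
  have hf' : EqOn (fun x => exp (-x)) (fun x => exp (-x) * f x) (Ioi A) :=
    fun x hx => by simp [hf hx]
  have hexp : IntegrableOn (fun x => exp (-x)) (Ioi A) := by
    simpa using exp_neg_integrableOn_Ioi A one_pos
  rw [integral_Ici_eq_integral_Ioi, ← intervalIntegral.integral_interval_add_Ioi'
      (((by fun_prop : Continuous _).intervalIntegrable 0 A).congr_uIoo hfg')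
      (hexp.congr_fun hf' measurableSet_Ioi),
    intervalIntegral.integral_congr_uIoo hfg', ← setIntegral_congr_fun measurableSet_Ioi hf',
    integral_exp_neg_Ioi]

theorem integral_exp_neg_mul_exp_neg_sub_div_mul {α β : ℝ} (hα : α ≠ 0) (hαβ : α ≠ β) (c : ℝ) :
    ∫ x in 0..c * α, exp (-x) * exp (-((c - x / α) * β)) =
      α / (α - β) * (exp (-(c * β)) - exp (-(c * α))) := by
  have hderiv : ∀ x, HasDerivAt (fun x => α / (β - α) * exp ((β - α) / α * x - c * β))
      (exp (-x) * exp (-((c - x / α) * β))) x := by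
    intro x
    refine ((((hasDerivAt_id x).const_mul ((β - α) / α)).sub_const (c * β)).exp.const_mul
      (α / (β - α))).congr_deriv ?_
    rw [← exp_add, id, show -x + -((c - x / α) * β) = (β - α) / α * x - c * β by field_simp; ring]
    field_simp
  rw [intervalIntegral.integral_eq_sub_of_hasDerivAt (fun x _ => hderiv x)
    (by apply Continuous.intervalIntegrable; fun_prop),
    show (β - α) / α * (c * α) - c * β = -(c * α) by field_simp; ring, mul_zero, zero_sub,
    ← neg_sub α β, div_neg]
  ring

theorem integral_exp_neg_mul_tailFormula {n : ℕ} {α : ℝ} {b : Fin n → ℝ} (hα : α ≠ 0)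
    (hαb : ∀ j, α ≠ b j) (c : ℝ) :
    ∫ x in 0..c * α, exp (-x) * tailFormula b (c - x / α) =
      ∑ j, α / (α - b j) * (exp (-(c * b j)) - exp (-(c * α))) *
        ∏ k ∈ univ.erase j, b k / (b k - b j) := by
  simp_rw [tailFormula, mul_sum, ← mul_assoc]
  rw [intervalIntegral.integral_finsetSum fun j _ => by
    apply Continuous.intervalIntegrable; fun_prop]
  simp_rw [intervalIntegral.integral_mul_const, integral_exp_neg_mul_exp_neg_sub_div_mul hα (hαb _)]

theorem tailFormula_cons {n : ℕ} {α : ℝ} {b : Fin n → ℝ}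
    (hinj : Function.Injective (Fin.cons α b : Fin (n + 1) → ℝ)) (c : ℝ) :
    tailFormula (Fin.cons α b : Fin (n + 1) → ℝ) c =
      ∑ j, α / (α - b j) * (exp (-(c * b j)) - exp (-(c * α))) *
        ∏ k ∈ univ.erase j, b k / (b k - b j) + exp (-(c * α)) := by
  have hid := sum_prod_erase_div_sub_eq_one hinj.injOn univ_nonempty
  rw [tailFormula]
  simp only [Fin.sum_univ_succ, Fin.prod_univ_erase_zero, Fin.prod_univ_erase_succ, Fin.cons_zero,
    Fin.cons_succ] at hid ⊢
  have hregroup : ∑ j, α / (α - b j) * (exp (-(c * b j)) - exp (-(c * α))) *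
        ∏ k ∈ univ.erase j, b k / (b k - b j) =
      ∑ j, exp (-(c * b j)) * (α / (α - b j) * ∏ k ∈ univ.erase j, b k / (b k - b j)) -
        exp (-(c * α)) * ∑ j, α / (α - b j) * ∏ k ∈ univ.erase j, b k / (b k - b j) := by
    rw [mul_sum, ← sum_sub_distrib]
    exact sum_congr rfl fun j _ => by ring
  rw [hregroup]
  linear_combination exp (-(c * α)) * hid

theorem tailIntegral_eq_tailFormula {n : ℕ} {a : Fin n → ℝ} (hpos : ∀ j, 0 < a j)
    (hinj : Function.Injective a) {c : ℝ} (hc : 0 < c) : tailIntegral a c = tailFormula a c := by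
  induction n generalizing c with
  | zero => simp [tailIntegral, tailFormula, tailRegion, hc.not_ge]
  | succ n ih =>
    obtain ⟨α, b, rfl⟩ : ∃ α b, a = Fin.cons α b := ⟨a 0, Fin.tail a, (Fin.cons_self_tail a).symm⟩
    have hα : 0 < α := hpos 0
    have hb : ∀ j, 0 < b j := fun j => hpos j.succ
    have hbinj : Function.Injective b := fun i j h => Fin.succ_injective n (hinj h)
    have hαb : ∀ j, α ≠ b j := fun j h =>
      Fin.succ_ne_zero j (hinj (a₁ := 0) (a₂ := j.succ) (by simpa using h)).symm
    rw [tailIntegral_cons, setIntegral_Ici_exp_neg_mul_eq (mul_pos hc hα)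
        (g := fun x => tailFormula b (c - x / α)) (by unfold tailFormula; fun_prop),
      integral_exp_neg_mul_tailFormula hα.ne' hαb, tailFormula_cons hinj]
    · intro x hx
      refine ih hb hbinj (sub_pos.2 ?_)
      rw [div_lt_iff₀ hα]
      exact hx.2
    · intro x hx
      refine tailIntegral_of_nonpos (fun j => (hb j).le) (sub_nonpos.2 ?_)
      rw [le_div_iff₀ hα]
      exact hx.le

theorem K0_formula (n : ℕ) (a : Fin n → ℝ)
    (hpos : ∀ j, 0 < a j) (hinj : Function.Injective a) :
    (∫ t in {t : Fin n → ℝ | (∀ j, 0 ≤ t j) ∧ 1 ≤ ∑ j, t j / a j},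
        Real.exp (-(∑ j, t j)))
      = ∑ j, Real.exp (-(a j)) *
          (∏ k ∈ Finset.univ.erase j, a k) / (∏ k ∈ Finset.univ.erase j, (a k - a j)) := by
  calc _ = tailFormula a 1 := tailIntegral_eq_tailFormula hpos hinj one_pos
    _ = _ := by simp only [tailFormula, one_mul, prod_div_distrib, mul_div_assoc]
end
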